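/- arXiv:1406.1949 — 3 statements merged into one kernel-verified Lean document; each statement's English description precedes it below -/
import Mathlib

section
/- Let P be a finite set of n ≥ 3 points in ℝ² such that no three points of P are collinear. Then there exists a point p ∈ P such that the number of distinct distances from p to the other points of P is at least ⌈(n-1)/3⌉. -/
/-!
Count the triples `(p, q, r)` of points of `P` with `q ≠ r` and `|pq| = |pr|`. Each apex `p` of
such a pair lies on the perpendicular bisector of `qr`, a line, so each of the `n(n-1)` ordered
pairs has at most two apexes and some `p` is the apex of at most `2(n-1)` pairs. If the `n - 1`
distances from that `p` take `t` values with multiplicities `m_d`, then Cauchy–Schwarz gives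
`(n-1)² ≤ t ∑ m_d² = t (#pairs + (n-1)) ≤ 3t(n-1)`, i.e. `n - 1 ≤ 3t`.
-/

open scoped Classical

open Finset AffineSubspace Module

namespace Finset

variable {α β : Type*} [DecidableEq β]

theorem sum_sq_card_fiber_eq_card_filter (s : Finset α) (f : α → β) :
    ∑ b ∈ s.image f, #{a ∈ s | f a = b} ^ 2 = #{z ∈ s ×ˢ s | f z.1 = f z.2} := by
  rw [card_eq_sum_card_fiberwise (f := fun z => f z.1) (t := s.image f)]
  · refine sum_congr rfl fun b _ => ?_
    rw [sq, ← card_product]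
    congr 1
    ext ⟨x, y⟩
    simp only [mem_product, mem_filter]
    constructor
    · rintro ⟨⟨hx, rfl⟩, hy, hyx⟩
      exact ⟨⟨⟨hx, hy⟩, hyx.symm⟩, rfl⟩
    · rintro ⟨⟨⟨hx, hy⟩, hxy⟩, rfl⟩
      exact ⟨⟨hx, rfl⟩, hy, hxy.symm⟩
  · exact fun z hz => mem_image_of_mem f (mem_product.1 (mem_filter.1 hz).1).1

theorem card_filter_product_le [DecidableEq α] (s : Finset α) (f : α → β) :
    #{z ∈ s ×ˢ s | f z.1 = f z.2} ≤ #{z ∈ s.offDiag | f z.1 = f z.2} + #s := by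
  rw [← diag_union_offDiag, filter_union, ← diag_card s]
  exact (card_union_le _ _).trans (by rw [add_comm]; gcongr; exact filter_subset _ _)

theorem sq_card_le_card_image_mul [DecidableEq α] (s : Finset α) (f : α → β) :
    #s ^ 2 ≤ #(s.image f) * (#{z ∈ s.offDiag | f z.1 = f z.2} + #s) := by
  have hcs : ((∑ b ∈ s.image f, #{a ∈ s | f a = b} : ℕ) : ℝ) ^ 2 ≤
      #(s.image f) * ∑ b ∈ s.image f, ((#{a ∈ s | f a = b} : ℕ) : ℝ) ^ 2 := by
    push_cast
    exact sq_sum_le_card_mul_sum_sq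
  rw [← card_eq_sum_card_image] at hcs
  calc #s ^ 2 ≤ #(s.image f) * ∑ b ∈ s.image f, #{a ∈ s | f a = b} ^ 2 := by exact_mod_cast hcs
    _ ≤ _ := by
      rw [sum_sq_card_fiber_eq_card_filter]
      gcongr
      exact card_filter_product_le s f

end Finset

theorem card_le_two_of_collinear {k V P : Type*} [DivisionRing k] [AddCommGroup V] [Module k V]
    [AddTorsor V P] {S T : Finset P}
    (hS : ∀ a ∈ S, ∀ b ∈ S, ∀ c ∈ S, a ≠ b → a ≠ c → b ≠ c → ¬ Collinear k ({a, b, c} : Set P))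
    (hTS : T ⊆ S) (hT : Collinear k (T : Set P)) : #T ≤ 2 := by
  by_contra! hlt
  obtain ⟨a, b, c, ha, hb, hc, hab, hac, hbc⟩ := two_lt_card_iff.1 hlt
  refine hS a (hTS ha) b (hTS hb) c (hTS hc) hab hac hbc (hT.subset ?_)
  simp [Set.insert_subset_iff, ha, hb, hc]

section Geometry

variable {V P : Type*} [NormedAddCommGroup V] [InnerProductSpace ℝ V] [MetricSpace P]
  [NormedAddTorsor V P]

theorem collinear_perpBisector (hV : finrank ℝ V = 2) {q r : P} (hqr : q ≠ r) :
    Collinear ℝ (perpBisector q r : Set P) := by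
  have : FiniteDimensional ℝ V := Module.finite_of_finrank_eq_succ hV
  have hspan : finrank ℝ (ℝ ∙ (r -ᵥ q)) = 1 := finrank_span_singleton (vsub_ne_zero.2 hqr.symm)
  have hsum := (ℝ ∙ (r -ᵥ q)).finrank_add_finrank_orthogonal
  rw [collinear_iff_finrank_le_one, ← direction_eq_vectorSpan, direction_perpBisector]
  omega

theorem card_filter_dist_eq_le_two (hV : finrank ℝ V = 2) {S : Finset P}
    (hS : ∀ a ∈ S, ∀ b ∈ S, ∀ c ∈ S, a ≠ b → a ≠ c → b ≠ c → ¬ Collinear ℝ ({a, b, c} : Set P))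
    {q r : P} (hqr : q ≠ r) : #{p ∈ S | dist p q = dist p r} ≤ 2 :=
  card_le_two_of_collinear hS (filter_subset _ _) <| (collinear_perpBisector hV hqr).subset
    fun _ hp => mem_perpBisector_iff_dist_eq.2 (mem_filter.1 hp).2

theorem sum_card_filter_dist_eq_le (hV : finrank ℝ V = 2) {S : Finset P}
    (hS : ∀ a ∈ S, ∀ b ∈ S, ∀ c ∈ S, a ≠ b → a ≠ c → b ≠ c → ¬ Collinear ℝ ({a, b, c} : Set P)) :
    ∑ p ∈ S, #{z ∈ S.offDiag | dist p z.1 = dist p z.2} ≤ 2 * #S.offDiag := by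
  simp only [card_filter]
  rw [sum_comm, mul_comm, ← smul_eq_mul, ← sum_const]
  refine sum_le_sum fun z hz => ?_
  rw [← card_filter]
  exact card_filter_dist_eq_le_two hV hS (mem_offDiag.1 hz).2.2

theorem sq_card_erase_le_card_image_dist_mul [DecidableEq P] (S : Finset P) (p : P) :
    #(S.erase p) ^ 2 ≤ #((S.erase p).image (dist p)) *
      (#{z ∈ S.offDiag | dist p z.1 = dist p z.2} + #(S.erase p)) := by
  refine (sq_card_le_card_image_mul (S.erase p) (dist p)).trans ?_
  gcongr _ * (?_ + _)
  exact card_le_card (filter_subset_filter _ (offDiag_mono (erase_subset p S)))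

end Geometry

theorem szemeredi_no_three_collinear (n : ℕ) (hn : 3 ≤ n)
    (P : Finset (EuclideanSpace ℝ (Fin 2))) (hP : P.card = n)
    (h3 : ∀ a ∈ P, ∀ b ∈ P, ∀ c ∈ P, a ≠ b → a ≠ c → b ≠ c →
      ¬ Collinear ℝ ({a, b, c} : Set (EuclideanSpace ℝ (Fin 2)))) :
    ∃ p ∈ P, (n - 1 + 2) / 3 ≤ ((P.erase p).image (fun q => dist p q)).card := by
  obtain ⟨p, hp, hpairs⟩ :
      ∃ p ∈ P, #{z ∈ P.offDiag | dist p z.1 = dist p z.2} < 2 * (n - 1) + 1 := by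
    refine exists_lt_of_sum_lt <|
      (sum_card_filter_dist_eq_le finrank_euclideanSpace_fin h3).trans_lt ?_
    rw [sum_const, smul_eq_mul, offDiag_card, hP, ← Nat.mul_sub_one, mul_add, mul_one,
      mul_left_comm]
    omega
  refine ⟨p, hp, ?_⟩
  set t := #((P.erase p).image (dist p))
  have hk : #(P.erase p) = n - 1 := by rw [card_erase_of_mem hp, hP]
  have hsq := sq_card_erase_le_card_image_dist_mul P p
  rw [hk] at hsq
  have hmul : (n - 1) * (n - 1) ≤ 3 * t * (n - 1) := by nlinarith
  have hdist : n - 1 ≤ 3 * t := Nat.le_of_mul_le_mul_right hmul (by omega)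
  omega
end

section
/- Let P be a finite set of n points in ℝ², and suppose: (1) the number of ordered quadruples (a,b,c,d) ∈ P⁴ of four distinct points with dist a b = dist c d > 0 is at most Q₁, and (2) the number of ordered triples (a,b,c) ∈ P³ of three distinct points with dist a b = dist a c (isosceles triples) is at most Q₂. Then for every p ∈ (0,1), there exists a subset P'' ⊆ P spanning every nonzero distance at most once with |P''| ≥ pn − p⁴Q₁ − p³Q₂. -/
/-!
Keep each point of `P` independently with probability `p`. The expected number of points kept is
`p n`, of equidistant quadruples of distinct points kept `p⁴ Q₁` at most, and of isosceles triples
kept `p³ Q₂` at most. Deleting one point of each surviving bad quadruple or triple leaves a set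
spanning every nonzero distance at most once, so some outcome gives such a set of size at least
`p n - p⁴ Q₁ - p³ Q₂`.
-/

open Finset

namespace Finset

variable {α ι R : Type*}

section CommRing

variable [CommRing R]

/-- The probability that the random subset of `s` which keeps each point independently with
probability `p` equals `S` (meaningful for `S ⊆ s`). -/
def subsetProb (p : R) (s S : Finset α) : R := p ^ #S * (1 - p) ^ (#s - #S)

theorem sum_subsetProb (p : R) (s : Finset α) : ∑ S ∈ s.powerset, subsetProb p s S = 1 := by
  simp [subsetProb, sum_pow_mul_eq_add_pow]

variable [DecidableEq α]

theorem sum_subsetProb_of_subset (p : R) {s T : Finset α} (hT : T ⊆ s) :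
    ∑ S ∈ s.powerset with T ⊆ S, subsetProb p s S = p ^ #T := by
  -- Expand `∏ i ∈ s, (p + [i ∉ T] (1 - p)) = p ^ #T`: the term of `S` vanishes unless `T ⊆ S`.
  have key := prod_add (fun _ => p) (fun i => if i ∈ T then 0 else 1 - p) s
  have hlhs : ∏ i ∈ s, (p + if i ∈ T then 0 else 1 - p) = p ^ #T :=
    calc ∏ i ∈ s, (p + if i ∈ T then 0 else 1 - p) = ∏ i ∈ s, if i ∈ T then p else 1 :=
          prod_congr rfl fun i _ => by split_ifs <;> ring
      _ = p ^ #T := by rw [prod_ite_mem, inter_eq_right.2 hT, prod_const]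
  rw [hlhs] at key
  rw [key, sum_filter]
  refine sum_congr rfl fun S hS => ?_
  rw [mem_powerset] at hS
  split_ifs with hTS
  · rw [prod_const, prod_congr rfl fun i hi => if_neg fun hiT => (mem_sdiff.1 hi).2 (hTS hiT),
      prod_const, card_sdiff_of_subset hS, subsetProb]
  · obtain ⟨i, hiT, hiS⟩ := not_subset.1 hTS
    have hi : (if i ∈ T then (0 : R) else 1 - p) = 0 := if_pos hiT
    rw [prod_eq_zero (mem_sdiff.2 ⟨hT hiT, hiS⟩) hi, mul_zero]

theorem sum_subsetProb_mul_card_filter_subset (p : R) {s : Finset α} {I : Finset ι}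
    {g : ι → Finset α} {k : ℕ} (hg : ∀ i ∈ I, g i ⊆ s) (hk : ∀ i ∈ I, #(g i) = k) :
    ∑ S ∈ s.powerset, subsetProb p s S * #{i ∈ I | g i ⊆ S} = p ^ k * #I := by
  simp_rw [card_filter, Nat.cast_sum, Nat.cast_ite, Nat.cast_one, Nat.cast_zero, mul_sum,
    mul_ite, mul_one, mul_zero]
  rw [sum_comm, sum_congr rfl fun i hi => by
    rw [← sum_filter, sum_subsetProb_of_subset p (hg i hi), hk i hi]]
  rw [sum_const, nsmul_eq_mul, mul_comm]

end CommRing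

section Ordered

variable [CommRing R] [LinearOrder R] [IsStrictOrderedRing R]

theorem subsetProb_pos {p : R} (hp₀ : 0 < p) (hp₁ : p < 1) (s S : Finset α) :
    0 < subsetProb p s S :=
  mul_pos (pow_pos hp₀ _) (pow_pos (sub_pos.2 hp₁) _)

theorem exists_subset_le_of_le_sum_subsetProb_mul {p : R} (hp₀ : 0 < p) (hp₁ : p < 1)
    {s : Finset α} {f : Finset α → R} {c : R}
    (h : c ≤ ∑ S ∈ s.powerset, subsetProb p s S * f S) : ∃ S ⊆ s, c ≤ f S := by
  rw [← one_mul c, ← sum_subsetProb p s, sum_mul] at h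
  obtain ⟨S, hS, hle⟩ := exists_le_of_sum_le ⟨∅, empty_mem_powerset s⟩ h
  exact ⟨S, mem_powerset.1 hS, le_of_mul_le_mul_left hle (subsetProb_pos hp₀ hp₁ s S)⟩

end Ordered

end Finset

section Metric

variable {α : Type*} [MetricSpace α] [DecidableEq α]

noncomputable def equidistantQuadruples (S : Finset α) : Finset (α × α × α × α) :=
  (S ×ˢ S ×ˢ S ×ˢ S).filter fun t =>
    t.1 ≠ t.2.1 ∧ t.1 ≠ t.2.2.1 ∧ t.1 ≠ t.2.2.2 ∧ t.2.1 ≠ t.2.2.1 ∧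
    t.2.1 ≠ t.2.2.2 ∧ t.2.2.1 ≠ t.2.2.2 ∧
    dist t.1 t.2.1 = dist t.2.2.1 t.2.2.2 ∧ 0 < dist t.1 t.2.1

noncomputable def isoscelesTriples (S : Finset α) : Finset (α × α × α) :=
  (S ×ˢ S ×ˢ S).filter fun t =>
    t.1 ≠ t.2.1 ∧ t.1 ≠ t.2.2 ∧ t.2.1 ≠ t.2.2 ∧
    dist t.1 t.2.1 = dist t.1 t.2.2

def DistinctDistances (S : Finset α) : Prop :=
  ∀ a ∈ S, ∀ b ∈ S, ∀ c ∈ S, ∀ e ∈ S, a ≠ b → c ≠ e →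
    dist a b = dist c e → ({a, b} : Finset α) = {c, e}

theorem equidistantQuadruples_mono {S T : Finset α} (h : S ⊆ T) :
    equidistantQuadruples S ⊆ equidistantQuadruples T :=
  filter_subset_filter _ (product_subset_product h (product_subset_product h
    (product_subset_product h h)))

theorem isoscelesTriples_mono {S T : Finset α} (h : S ⊆ T) :
    isoscelesTriples S ⊆ isoscelesTriples T :=
  filter_subset_filter _ (product_subset_product h (product_subset_product h h))

theorem card_equidistantQuadruples_erase_lt {S : Finset α} {u : α × α × α × α}
    (hu : u ∈ equidistantQuadruples S) :
    #(equidistantQuadruples (S.erase u.1)) < #(equidistantQuadruples S) :=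
  card_lt_card ⟨equidistantQuadruples_mono (erase_subset _ _), fun h => by
    simpa [equidistantQuadruples] using h hu⟩

theorem card_isoscelesTriples_erase_lt {S : Finset α} {t : α × α × α}
    (ht : t ∈ isoscelesTriples S) :
    #(isoscelesTriples (S.erase t.1)) < #(isoscelesTriples S) :=
  card_lt_card ⟨isoscelesTriples_mono (erase_subset _ _), fun h => by
    simpa [isoscelesTriples] using h ht⟩

theorem exists_isoscelesTriple_or_equidistantQuadruple {S : Finset α}
    (h : ¬ DistinctDistances S) :
    (isoscelesTriples S).Nonempty ∨ (equidistantQuadruples S).Nonempty := by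
  simp only [DistinctDistances, not_forall] at h
  obtain ⟨a, ha, b, hb, c, hc, e, he, hab, hce, hd, hne⟩ := h
  -- Two distinct pairs at equal distance either share a point, the apex of an isosceles triple,
  -- or are disjoint.
  by_cases hac : a = c
  · exact Or.inl ⟨(a, b, e), by grind [isoscelesTriples, pair_comm, dist_comm]⟩
  by_cases hae : a = e
  · exact Or.inl ⟨(a, b, c), by grind [isoscelesTriples, pair_comm, dist_comm]⟩
  by_cases hbc : b = c
  · exact Or.inl ⟨(b, a, e), by grind [isoscelesTriples, pair_comm, dist_comm]⟩
  by_cases hbe : b = e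
  · exact Or.inl ⟨(b, a, c), by grind [isoscelesTriples, pair_comm, dist_comm]⟩
  exact Or.inr ⟨(a, b, c, e), by grind [equidistantQuadruples, dist_pos]⟩

theorem exists_mem_card_erase_lt {S : Finset α} (h : ¬ DistinctDistances S) :
    ∃ x ∈ S, #(equidistantQuadruples (S.erase x)) + #(isoscelesTriples (S.erase x)) <
      #(equidistantQuadruples S) + #(isoscelesTriples S) := by
  rcases exists_isoscelesTriple_or_equidistantQuadruple h with ⟨t, ht⟩ | ⟨u, hu⟩
  · refine ⟨t.1, (mem_product.1 (mem_filter.1 ht).1).1, ?_⟩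
    have := card_le_card (equidistantQuadruples_mono (erase_subset t.1 S))
    have := card_isoscelesTriples_erase_lt ht
    omega
  · refine ⟨u.1, (mem_product.1 (mem_filter.1 hu).1).1, ?_⟩
    have := card_equidistantQuadruples_erase_lt hu
    have := card_le_card (isoscelesTriples_mono (erase_subset u.1 S))
    omega

theorem exists_subset_distinctDistances_card_le (S : Finset α) :
    ∃ T ⊆ S, DistinctDistances T ∧
      #S ≤ #T + #(equidistantQuadruples S) + #(isoscelesTriples S) := by
  induction S using strongInduction with
  | _ S ih =>
  by_cases hS : DistinctDistances S
  · exact ⟨S, Subset.rfl, hS, by omega⟩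
  obtain ⟨x, hx, hlt⟩ := exists_mem_card_erase_lt hS
  obtain ⟨T, hTS, hT, hcard⟩ := ih (S.erase x) (erase_ssubset hx)
  refine ⟨T, hTS.trans (erase_subset x S), hT, ?_⟩
  have := card_erase_add_one hx
  omega

theorem filter_support_subset_equidistantQuadruples {S P : Finset α} (hS : S ⊆ P) :
    {u ∈ equidistantQuadruples P | ({u.1, u.2.1, u.2.2.1, u.2.2.2} : Finset α) ⊆ S} =
      equidistantQuadruples S := by
  ext u
  simp only [equidistantQuadruples, insert_subset_iff,
    singleton_subset_iff]
  grind

theorem filter_support_subset_isoscelesTriples {S P : Finset α} (hS : S ⊆ P) :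
    {t ∈ isoscelesTriples P | ({t.1, t.2.1, t.2.2} : Finset α) ⊆ S} = isoscelesTriples S := by
  ext t
  simp only [isoscelesTriples, insert_subset_iff, singleton_subset_iff]
  grind

theorem sum_subsetProb_mul_surplus {R : Type*} [CommRing R] (p : R) (P : Finset α) :
    ∑ S ∈ P.powerset, subsetProb p P S *
        ((#S : R) - #(equidistantQuadruples S) - #(isoscelesTriples S)) =
      p * #P - p ^ 4 * #(equidistantQuadruples P) - p ^ 3 * #(isoscelesTriples P) := by
  have hpts : ∑ S ∈ P.powerset, subsetProb p P S * #S = p * #P := by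
    have := sum_subsetProb_mul_card_filter_subset p (I := P) (g := singleton)
      (fun x => singleton_subset_iff.2) (fun x _ => card_singleton x)
    rw [pow_one] at this
    rw [← this]
    refine sum_congr rfl fun S hS => ?_
    rw [filter_congr fun x _ => singleton_subset_iff, filter_mem_eq_inter,
      inter_eq_right.2 (mem_powerset.1 hS)]
  have hquad : ∑ S ∈ P.powerset, subsetProb p P S * #(equidistantQuadruples S) =
      p ^ 4 * #(equidistantQuadruples P) := by
    rw [← sum_subsetProb_mul_card_filter_subset p (s := P) (I := equidistantQuadruples P)
      (g := fun u => {u.1, u.2.1, u.2.2.1, u.2.2.2})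
      (fun u hu => by simp_all [equidistantQuadruples, insert_subset_iff])
      (fun u hu => card_eq_four.2
        ⟨u.1, u.2.1, u.2.2.1, u.2.2.2, by simp_all [equidistantQuadruples]⟩)]
    refine sum_congr rfl fun S hS => ?_
    rw [filter_support_subset_equidistantQuadruples (mem_powerset.1 hS)]
  have htri : ∑ S ∈ P.powerset, subsetProb p P S * #(isoscelesTriples S) =
      p ^ 3 * #(isoscelesTriples P) := by
    rw [← sum_subsetProb_mul_card_filter_subset p (s := P) (I := isoscelesTriples P)
      (g := fun t => {t.1, t.2.1, t.2.2})
      (fun t ht => by simp_all [isoscelesTriples, insert_subset_iff])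
      (fun t ht => card_eq_three.2 ⟨t.1, t.2.1, t.2.2, by simp_all [isoscelesTriples]⟩)]
    refine sum_congr rfl fun S hS => ?_
    rw [filter_support_subset_isoscelesTriples (mem_powerset.1 hS)]
  simp only [mul_sub, sum_sub_distrib, hpts, hquad, htri]

end Metric

theorem charalambides_probabilistic (n Q₁ Q₂ : ℕ)
    (P : Finset (EuclideanSpace ℝ (Fin 2))) (hP : P.card = n)
    (hQ1 : ((P ×ˢ P ×ˢ P ×ˢ P).filter fun t =>
        t.1 ≠ t.2.1 ∧ t.1 ≠ t.2.2.1 ∧ t.1 ≠ t.2.2.2 ∧ t.2.1 ≠ t.2.2.1 ∧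
        t.2.1 ≠ t.2.2.2 ∧ t.2.2.1 ≠ t.2.2.2 ∧
        dist t.1 t.2.1 = dist t.2.2.1 t.2.2.2 ∧ 0 < dist t.1 t.2.1).card ≤ Q₁)
    (hQ2 : ((P ×ˢ P ×ˢ P).filter fun t =>
        t.1 ≠ t.2.1 ∧ t.1 ≠ t.2.2 ∧ t.2.1 ≠ t.2.2 ∧
        dist t.1 t.2.1 = dist t.1 t.2.2).card ≤ Q₂) :
    ∀ p : ℝ, 0 < p → p < 1 →
      ∃ P'' ⊆ P,
        (∀ a ∈ P'', ∀ b ∈ P'', ∀ c ∈ P'', ∀ e ∈ P'', a ≠ b → c ≠ e →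
          dist a b = dist c e →
          ({a, b} : Finset (EuclideanSpace ℝ (Fin 2))) = {c, e}) ∧
        p * n - p ^ 4 * Q₁ - p ^ 3 * Q₂ ≤ (P''.card : ℝ) := by
  intro p hp₀ hp₁
  have hQ₁ : (#(equidistantQuadruples P) : ℝ) ≤ Q₁ := by exact_mod_cast hQ1
  have hQ₂ : (#(isoscelesTriples P) : ℝ) ≤ Q₂ := by exact_mod_cast hQ2
  have hmean : p * n - p ^ 4 * Q₁ - p ^ 3 * Q₂ ≤ ∑ S ∈ P.powerset, subsetProb p P S *
      ((#S : ℝ) - #(equidistantQuadruples S) - #(isoscelesTriples S)) := by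
    rw [sum_subsetProb_mul_surplus, hP]
    gcongr
  obtain ⟨S, hSP, hS⟩ := exists_subset_le_of_le_sum_subsetProb_mul hp₀ hp₁ hmean
  obtain ⟨T, hTS, hT, hcard⟩ := exists_subset_distinctDistances_card_le S
  refine ⟨T, hTS.trans hSP, hT, ?_⟩
  have : (#S : ℝ) ≤ #T + #(equidistantQuadruples S) + #(isoscelesTriples S) := by
    exact_mod_cast hcard
  linarith
end

section
/- Let k ≥ 3 and let P be a finite set of n points in ℝ² (n ≥ k) such that every k-element subset of P determines at least C(k,2) − k + 3 distinct distances. Then for every p ∈ P, no circle centered at p contains k − 1 or more points of P \ {p}; consequently, every point p ∈ P determines at least (n−1)/(k−2) distinct distances to the other points of P. -/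
open scoped Classical

/-!
If `k - 1` points of `P` lie on a circle around `p`, then together with `p` they form a `k`-set
whose distances are the radius and at most `C(k-1, 2)` others, i.e. at most `C(k, 2) - k + 2`
in all, contradicting the hypothesis. Hence every circle around `p` carries at most `k - 2`
points of `P`, and the `n - 1` other points are spread over the distinct distances from `p`.
-/

open Finset

section

variable {α : Type*} [PseudoMetricSpace α] [DecidableEq α]

noncomputable def distances (S : Finset α) : Finset ℝ :=
  S.offDiag.image fun pq => dist pq.1 pq.2

/-- Each distance is the diameter of a 2-element subset. -/
theorem card_distances_le_choose_two (S : Finset α) : (distances S).card ≤ S.card.choose 2 := by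
  have hsub :
      distances S ⊆ (S.powersetCard 2).image fun t : Finset α => Metric.diam (t : Set α) := by
    simp only [distances, subset_iff, mem_image, mem_offDiag, Prod.exists]
    rintro d ⟨a, b, ⟨ha, hb, hab⟩, rfl⟩
    refine ⟨{a, b}, mem_powersetCard.2 ⟨?_, card_pair hab⟩, by simp [Metric.diam_pair]⟩
    exact insert_subset ha (singleton_subset_iff.2 hb)
  calc (distances S).card ≤ _ := card_le_card hsub
    _ ≤ (S.powersetCard 2).card := card_image_le
    _ = S.card.choose 2 := card_powersetCard 2 S

theorem distances_insert_subset {p : α} {r : ℝ} {T : Finset α} (hT : ∀ q ∈ T, dist p q = r) :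
    distances (insert p T) ⊆ insert r (distances T) := by
  simp only [distances, subset_iff, mem_image, mem_offDiag, mem_insert, Prod.exists]
  rintro d ⟨a, b, ⟨ha | ha, hb | hb, hab⟩, rfl⟩
  · exact absurd (ha.trans hb.symm) hab
  · exact Or.inl (ha ▸ hT b hb)
  · exact Or.inl (hb ▸ (dist_comm a p).trans (hT a ha))
  · exact Or.inr ⟨a, b, ⟨ha, hb, hab⟩, rfl⟩

theorem card_distances_insert_le {p : α} {r : ℝ} {T : Finset α} (hT : ∀ q ∈ T, dist p q = r) :
    (distances (insert p T)).card ≤ T.card.choose 2 + 1 :=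
  calc (distances (insert p T)).card ≤ (insert r (distances T)).card :=
        card_le_card (distances_insert_subset hT)
    _ ≤ (distances T).card + 1 := card_insert_le _ _
    _ ≤ T.card.choose 2 + 1 := by gcongr; exact card_distances_le_choose_two T

theorem exists_card_distances_le_of_card_sphere {P : Finset α} {p : α} {r : ℝ} {k : ℕ}
    (hk : 1 ≤ k) (hp : p ∈ P)
    (hsphere : k - 1 ≤ ((P.erase p).filter fun q => dist p q = r).card) :
    ∃ S ⊆ P, S.card = k ∧ (distances S).card ≤ (k - 1).choose 2 + 1 := by
  obtain ⟨T, hTsub, hTcard⟩ := exists_subset_card_eq hsphere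
  have hTerase : T ⊆ P.erase p := hTsub.trans (filter_subset _ _)
  have hpT : p ∉ T := fun h => (mem_erase.1 (hTerase h)).1 rfl
  refine ⟨insert p T, insert_subset hp (hTerase.trans (erase_subset p P)), ?_, ?_⟩
  · rw [card_insert_of_notMem hpT, hTcard]
    omega
  · rw [← hTcard]
    exact card_distances_insert_le fun q hq => (mem_filter.1 (hTsub hq)).2

theorem card_filter_dist_eq_le {P : Finset α} {k : ℕ} (hk : 1 ≤ k)
    (hloc : ∀ S ⊆ P, S.card = k → k.choose 2 - k + 3 ≤ (distances S).card)
    {p : α} (hp : p ∈ P) (r : ℝ) :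
    ((P.erase p).filter fun q => dist p q = r).card ≤ k - 2 := by
  by_contra! hcard
  obtain ⟨S, hSP, hScard, hS⟩ := exists_card_distances_le_of_card_sphere (r := r) hk hp (by omega)
  have hpascal : k.choose 2 = (k - 1).choose 2 + (k - 1) := by
    obtain ⟨j, rfl⟩ := Nat.exists_eq_add_of_le' hk
    simp [Nat.choose_succ_succ', add_comm]
  have := hloc S hSP hScard
  omega

end

theorem local_to_global_k_general (k n : ℕ) (hk : 3 ≤ k)
    (P : Finset (EuclideanSpace ℝ (Fin 2))) (hP : P.card = n)
    (hloc : ∀ S ⊆ P, S.card = k →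
      k.choose 2 - k + 3 ≤ ((S.offDiag).image fun pq => dist pq.1 pq.2).card) :
    (∀ p ∈ P, ∀ r : ℝ,
      ((P.erase p).filter fun q => dist p q = r).card ≤ k - 2) ∧
    (∀ p ∈ P, ((n : ℝ) - 1) / ((k : ℝ) - 2) ≤
      (((P.erase p).image (fun q => dist p q)).card : ℝ)) := by
  have hcircle := fun p (hp : p ∈ P) => card_filter_dist_eq_le (by omega) hloc hp
  refine ⟨hcircle, fun p hp => ?_⟩
  have hfibers : (P.erase p).card ≤ (k - 2) * ((P.erase p).image fun q => dist p q).card :=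
    card_le_mul_card_image _ _ fun r _ => hcircle p hp r
  rw [card_erase_of_mem hp, hP] at hfibers
  have hn : 1 ≤ n := hP ▸ card_pos.2 ⟨p, hp⟩
  have hcast : ((n - 1 : ℕ) : ℝ) ≤
      ((k - 2 : ℕ) : ℝ) * ((P.erase p).image fun q => dist p q).card := by
    exact_mod_cast hfibers
  rw [Nat.cast_sub hn, Nat.cast_sub (by omega)] at hcast
  have hk2 : (0 : ℝ) < (k : ℝ) - 2 := by
    have : (3 : ℝ) ≤ k := by exact_mod_cast hk
    linarith
  rw [div_le_iff₀ hk2]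
  push_cast at hcast
  linarith

theorem local_to_global_k (k n : ℕ) (hk : 3 ≤ k) (hn : k ≤ n)
    (P : Finset (EuclideanSpace ℝ (Fin 2))) (hP : P.card = n)
    (hloc : ∀ S ⊆ P, S.card = k →
      k.choose 2 - k + 3 ≤ ((S.offDiag).image fun pq => dist pq.1 pq.2).card) :
    (∀ p ∈ P, ∀ r : ℝ,
      ((P.erase p).filter fun q => dist p q = r).card ≤ k - 2) ∧
    (∀ p ∈ P, ((n : ℝ) - 1) / ((k : ℝ) - 2) ≤
      (((P.erase p).image (fun q => dist p q)).card : ℝ)) :=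
  local_to_global_k_general k n hk P hP hloc
end
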